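/- Let d ≥ 3 and let V be a B∞ potential with constant C₀ which is not almost everywhere zero. Then there exist constants C > 0, c > 0 and k₀ > 0, depending only on d and C₀, such that for all x, y ∈ ℝ^d: (i) if |x − y| ≤ C/m(x,V) then c·m(y,V) ≤ m(x,V) ≤ C·m(y,V); (ii) c (1 + |x−y| m(x,V))^{−k₀} ≤ m(x,V)/m(y,V) ≤ C (1 + |x−y| m(x,V))^{k₀/(k₀+1)}; (iii) c (1 + |x−y| m(y,V))^{1/(k₀+1)} ≤ 1 + |x−y| m(x,V) ≤ C (1 + |x−y| m(y,V))^{k₀+1}. -/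

import Mathlib

open MeasureTheory Metric Set

noncomputable section

/-- `ℝ^d` as Euclidean space. -/
abbrev Ed (d : ℕ) := EuclideanSpace ℝ (Fin d)

/-- The `B_∞` condition with constant `C₀`:
`ess sup_B V ≤ C₀ ⨍_B V` for every ball `B ⊆ ℝ^d`. -/
def BInfty (d : ℕ) (C₀ : ℝ) (V : Ed d → ℝ) : Prop :=
  ∀ (x : Ed d) (r : ℝ), 0 < r →
    ∀ᵐ y ∂(volume.restrict (ball x r)), V y ≤ C₀ * ⨍ z in ball x r, V z

/-- `ψ(x,r) = r^{2-d} ∫_{B(x,r)} V`. -/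
def psiFun (d : ℕ) (V : Ed d → ℝ) (x : Ed d) (r : ℝ) : ℝ :=
  r ^ ((2 : ℝ) - d) * ∫ y in ball x r, V y

/-- "Good potential": measurable, locally bounded, positive a.e., `B_∞` with constant `C₀`. -/
def GoodV (d : ℕ) (C₀ : ℝ) (V : Ed d → ℝ) : Prop :=
  Measurable V ∧ (∀ x : Ed d, ∃ r > 0, ∃ K : ℝ, ∀ y ∈ ball x r, |V y| ≤ K) ∧
    (∀ᵐ x : Ed d ∂volume, 0 < V x) ∧ BInfty d C₀ V

/-- The Fefferman–Phong–Shen maximal function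
`m(x,V) = inf { 1/r : r > 0, ψ(x,r) ≤ 1 }`. -/
def mFun (d : ℕ) (V : Ed d → ℝ) (x : Ed d) : ℝ :=
  sInf {s : ℝ | ∃ r : ℝ, 0 < r ∧ s = 1 / r ∧ psiFun d V x r ≤ 1}

/-!
If `B(y,r) ⊆ B(x,R)`, the `B∞` condition bounds `∫_{B(y,r)} V` by `C₀ (r/R)^d ∫_{B(x,R)} V`,
so `ψ(y,r) ≤ C₀ (r/R)² ψ(x,R)`. Applied to the annulus `B(x,tr) \ B(x,r)`, with `t > 1` such that
`t^d = 2C₀/(2C₀-1)`, the same bound shows that `V dx` is doubling, whence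
`ψ(x,R) ≤ (tR/r)^N ψ(x,r)` for `r ≤ R`. Take `r ≈ 1/m(x)` with `ψ(x,r) ≤ 1`: the growth bound
controls `ψ(x, r + |x-y|)`, and the comparison then gives `ψ(y,ρ) ≤ 1` for some
`ρ ≳ ((1 + |x-y| m(x))^k m(x))⁻¹`, that is `m(y) ≤ A (1 + |x-y| m(x))^k m(x)`. The three
estimates are elementary consequences of this inequality and of the one with `x` and `y` exchanged.
-/

variable {d : ℕ} {C₀ : ℝ} {V : Ed d → ℝ}

lemma GoodV.integral_ball_nonneg (hV : GoodV d C₀ V) (x : Ed d) (r : ℝ) :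
    0 ≤ ∫ y in ball x r, V y :=
  setIntegral_nonneg_ae measurableSet_ball <| hV.2.2.1.mono fun _ hy _ => hy.le

lemma GoodV.locallyIntegrable (hV : GoodV d C₀ V) : LocallyIntegrable V volume := fun x => by
  obtain ⟨r, hr, K, hK⟩ := hV.2.1 x
  refine ⟨ball x r, ball_mem_nhds x hr, Measure.integrableOn_of_bounded (M := K)
    measure_ball_lt_top.ne hV.1.aestronglyMeasurable ?_⟩
  exact ae_restrict_of_forall_mem measurableSet_ball fun y hy =>
    (hK y hy).trans_eq' (Real.norm_eq_abs _)

lemma GoodV.integrableOn_ball (hV : GoodV d C₀ V) (x : Ed d) (r : ℝ) :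
    IntegrableOn V (ball x r) :=
  (hV.locallyIntegrable.integrableOn_isCompact (isCompact_closedBall x r)).mono_set
    ball_subset_closedBall

lemma GoodV.integral_ball_pos (hV : GoodV d C₀ V) (x : Ed d) {r : ℝ} (hr : 0 < r) :
    0 < ∫ y in ball x r, V y := by
  have hsupp : volume (Function.support V)ᶜ = 0 := ae_iff.1 (hV.2.2.1.mono fun _ hy => hy.ne')
  rw [setIntegral_pos_iff_support_of_nonneg_ae
      (ae_restrict_of_ae (hV.2.2.1.mono fun _ hy => hy.le)) (hV.integrableOn_ball x r),
    inter_comm, measure_inter_conull hsupp]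
  exact measure_ball_pos volume x hr

lemma GoodV.integral_ball_mono (hV : GoodV d C₀ V) (x : Ed d) {r R : ℝ} (hrR : r ≤ R) :
    ∫ y in ball x r, V y ≤ ∫ y in ball x R, V y :=
  setIntegral_mono_set (hV.integrableOn_ball x R)
    (ae_restrict_of_ae (hV.2.2.1.mono fun _ hy => hy.le))
    (ball_subset_ball hrR).eventuallyLE

lemma volume_real_ball (x : Ed d) {r : ℝ} (hr : 0 < r) :
    volume.real (ball x r) = r ^ d * volume.real (ball (0 : Ed d) 1) := by
  rw [measureReal_def, Measure.addHaar_ball_of_pos _ x hr, finrank_euclideanSpace_fin,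
    ENNReal.toReal_mul, ENNReal.toReal_ofReal (by positivity), measureReal_def]

lemma volume_real_ball_pos (x : Ed d) {r : ℝ} (hr : 0 < r) : 0 < volume.real (ball x r) :=
  ENNReal.toReal_pos (measure_ball_pos volume x hr).ne' measure_ball_lt_top.ne

lemma GoodV.setIntegral_le_of_subset_ball (hV : GoodV d C₀ V) {x : Ed d} {R : ℝ} (hR : 0 < R)
    {s : Set (Ed d)} (hs : s ⊆ ball x R) :
    ∫ y in s, V y ≤ C₀ * (volume.real s / volume.real (ball x R)) * ∫ y in ball x R, V y := by
  have hbound : ∀ᵐ y ∂volume.restrict s, V y ≤ C₀ * ⨍ z in ball x R, V z :=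
    ae_restrict_of_ae_restrict_of_subset hs (hV.2.2.2 x R hR)
  calc ∫ y in s, V y ≤ ∫ _ in s, C₀ * ⨍ z in ball x R, V z :=
        integral_mono_ae ((hV.integrableOn_ball x R).mono_set hs)
          (integrableOn_const (measure_ne_top_of_subset hs measure_ball_lt_top.ne)) hbound
    _ = _ := by rw [setIntegral_const, setAverage_eq, smul_eq_mul, smul_eq_mul]; ring

lemma GoodV.one_le (hV : GoodV d C₀ V) : 1 ≤ C₀ := by
  have h := hV.setIntegral_le_of_subset_ball one_pos (subset_refl (ball (0 : Ed d) 1))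
  rw [div_self (volume_real_ball_pos (0 : Ed d) one_pos).ne', mul_one] at h
  exact le_of_mul_le_mul_right (by rwa [one_mul]) (hV.integral_ball_pos 0 one_pos)

lemma GoodV.integral_ball_le_of_subset (hV : GoodV d C₀ V) {x y : Ed d} {r R : ℝ} (hr : 0 < r)
    (hxy : dist x y + r ≤ R) :
    ∫ z in ball y r, V z ≤ C₀ * (r / R) ^ d * ∫ z in ball x R, V z := by
  have hR : 0 < R := by linarith [dist_nonneg (x := x) (y := y)]
  have hsub : ball y r ⊆ ball x R := ball_subset_ball' (by rwa [dist_comm, add_comm])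
  have hratio : volume.real (ball y r) / volume.real (ball x R) = (r / R) ^ d := by
    rw [volume_real_ball y hr, volume_real_ball x hR, div_pow,
      mul_div_mul_right _ _ (volume_real_ball_pos (0 : Ed d) one_pos).ne']
  simpa only [hratio] using hV.setIntegral_le_of_subset_ball hR hsub

lemma rpow_two_sub_mul_pow {r : ℝ} (hr : 0 < r) (d : ℕ) : r ^ ((2 : ℝ) - d) * r ^ d = r ^ 2 := by
  rw [← Real.rpow_natCast r d, ← Real.rpow_add hr, sub_add_cancel, Real.rpow_two]

lemma GoodV.psiFun_le_of_subset (hV : GoodV d C₀ V) {x y : Ed d} {r R : ℝ} (hr : 0 < r)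
    (hxy : dist x y + r ≤ R) : psiFun d V y r ≤ C₀ * (r / R) ^ 2 * psiFun d V x R := by
  have hR : 0 < R := by linarith [dist_nonneg (x := x) (y := y)]
  calc psiFun d V y r ≤ r ^ ((2 : ℝ) - d) * (C₀ * (r / R) ^ d * ∫ z in ball x R, V z) :=
        mul_le_mul_of_nonneg_left (hV.integral_ball_le_of_subset hr hxy) (by positivity)
    _ = C₀ * (r ^ ((2 : ℝ) - d) * r ^ d) / (R ^ ((2 : ℝ) - d) * R ^ d) * psiFun d V x R := by
        rw [psiFun, div_pow]; field_simp
    _ = C₀ * (r / R) ^ 2 * psiFun d V x R := by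
        rw [rpow_two_sub_mul_pow hr, rpow_two_sub_mul_pow hR, div_pow]; ring

lemma GoodV.psiFun_nonneg (hV : GoodV d C₀ V) (x : Ed d) {r : ℝ} (hr : 0 ≤ r) :
    0 ≤ psiFun d V x r :=
  mul_nonneg (Real.rpow_nonneg hr _) (hV.integral_ball_nonneg x r)

lemma exists_annulus_ratio (hd : d ≠ 0) (hC : 1 < 2 * C₀) :
    ∃ t : ℝ, 1 < t ∧ 2 * C₀ * (t ^ d - 1) ≤ t ^ d := by
  set u : ℝ := 1 - (2 * C₀)⁻¹
  have hu0 : 0 < u := sub_pos.2 (inv_lt_one_of_one_lt₀ hC)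
  have hu1 : u < 1 := sub_lt_self _ (by positivity)
  have htd : (u ^ (-(d : ℝ)⁻¹)) ^ d = u⁻¹ := by
    rw [← Real.rpow_mul_natCast hu0.le, neg_mul, inv_mul_cancel₀ (by exact_mod_cast hd),
      Real.rpow_neg_one]
  refine ⟨u ^ (-(d : ℝ)⁻¹), Real.one_lt_rpow_of_pos_of_lt_one_of_neg hu0 hu1 (by
    simp only [Left.neg_neg_iff, inv_pos]; exact_mod_cast Nat.pos_of_ne_zero hd), ?_⟩
  have h1 : 2 * C₀ * (1 - u) = 1 := by
    simp only [u, sub_sub_cancel]; exact mul_inv_cancel₀ (by positivity)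
  rw [htd, ← sub_nonneg, show u⁻¹ - 2 * C₀ * (u⁻¹ - 1) = u⁻¹ * (1 - 2 * C₀ * (1 - u)) by
    field_simp, h1, sub_self, mul_zero]

lemma GoodV.integral_ball_mul_le_two_mul (hV : GoodV d C₀ V) {t : ℝ} (ht : 1 ≤ t)
    (htd : 2 * C₀ * (t ^ d - 1) ≤ t ^ d) (x : Ed d) {r : ℝ} (hr : 0 < r) :
    ∫ y in ball x (t * r), V y ≤ 2 * ∫ y in ball x r, V y := by
  have htr : 0 < t * r := by positivity
  have hsub : ball x r ⊆ ball x (t * r) := ball_subset_ball (le_mul_of_one_le_left hr.le ht)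
  -- by the choice of `t`, the annulus `B(x,tr) \ B(x,r)` carries at most half the mass of `B(x,tr)`
  have hannulus :=
    hV.setIntegral_le_of_subset_ball htr (sdiff_subset : ball x (t * r) \ ball x r ⊆ _)
  have hratio : volume.real (ball x (t * r) \ ball x r) / volume.real (ball x (t * r)) =
      (t ^ d - 1) / t ^ d := by
    rw [measureReal_sdiff hsub measurableSet_ball, volume_real_ball x htr, volume_real_ball x hr]
    have := volume_real_ball_pos (0 : Ed d) one_pos
    field_simp
    ring
  have hhalf : C₀ * ((t ^ d - 1) / t ^ d) ≤ 1 / 2 := by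
    rw [mul_div_assoc', div_le_div_iff₀ (by positivity) two_pos]
    linarith
  rw [setIntegral_sdiff measurableSet_ball (hV.integrableOn_ball x (t * r)) hsub,
    hratio] at hannulus
  nlinarith [hV.integral_ball_nonneg x (t * r)]

lemma GoodV.integral_ball_le_pow (hV : GoodV d C₀ V) {t : ℝ} {N : ℕ} (ht : 1 < t)
    (htd : 2 * C₀ * (t ^ d - 1) ≤ t ^ d) (htN : 2 ≤ t ^ N) (x : Ed d) {r R : ℝ} (hr : 0 < r)
    (hrR : r ≤ R) : ∫ y in ball x R, V y ≤ (t * (R / r)) ^ N * ∫ y in ball x r, V y := by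
  have hiter (n : ℕ) : ∫ y in ball x (t ^ n * r), V y ≤ 2 ^ n * ∫ y in ball x r, V y := by
    induction n with
    | zero => simp
    | succ n ih =>
      calc ∫ y in ball x (t ^ (n + 1) * r), V y = ∫ y in ball x (t * (t ^ n * r)), V y := by
            rw [pow_succ', mul_assoc]
        _ ≤ 2 * ∫ y in ball x (t ^ n * r), V y :=
            hV.integral_ball_mul_le_two_mul ht.le htd x (by positivity)
        _ ≤ 2 ^ (n + 1) * ∫ y in ball x r, V y := by rw [pow_succ']; linarith
  obtain ⟨n, hn, hn'⟩ := exists_nat_pow_near ((one_le_div hr).2 hrR) ht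
  have hI := hV.integral_ball_nonneg x r
  calc ∫ y in ball x R, V y ≤ ∫ y in ball x (t ^ (n + 1) * r), V y :=
        hV.integral_ball_mono x ((div_le_iff₀ hr).1 hn'.le)
    _ ≤ (t ^ N) ^ (n + 1) * ∫ y in ball x r, V y :=
        (hiter _).trans (by gcongr)
    _ = (t * t ^ n) ^ N * ∫ y in ball x r, V y := by
        rw [← pow_succ', ← pow_mul, ← pow_mul, mul_comm N]
    _ ≤ (t * (R / r)) ^ N * ∫ y in ball x r, V y := by gcongr

lemma GoodV.psiFun_le_pow (hV : GoodV d C₀ V) (hd : 2 ≤ d) {t : ℝ} {N : ℕ} (ht : 1 < t)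
    (htd : 2 * C₀ * (t ^ d - 1) ≤ t ^ d) (htN : 2 ≤ t ^ N) (x : Ed d) {r R : ℝ} (hr : 0 < r)
    (hrR : r ≤ R) : psiFun d V x R ≤ (t * (R / r)) ^ N * psiFun d V x r := by
  have hexp : (2 : ℝ) - d ≤ 0 := by
    rw [sub_nonpos]; exact_mod_cast hd
  calc psiFun d V x R ≤ r ^ ((2 : ℝ) - d) * ∫ y in ball x R, V y :=
        mul_le_mul_of_nonneg_right (Real.rpow_le_rpow_of_nonpos hr hrR hexp)
          (hV.integral_ball_nonneg x R)
    _ ≤ r ^ ((2 : ℝ) - d) * ((t * (R / r)) ^ N * ∫ y in ball x r, V y) := by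
        gcongr; exact hV.integral_ball_le_pow ht htd htN x hr hrR
    _ = (t * (R / r)) ^ N * psiFun d V x r := by rw [psiFun]; ring

lemma mFun_nonneg (x : Ed d) : 0 ≤ mFun d V x :=
  Real.sInf_nonneg (by rintro _ ⟨r, hr, rfl, -⟩; positivity)

lemma mFun_le_one_div {x : Ed d} {r : ℝ} (hr : 0 < r) (hψ : psiFun d V x r ≤ 1) :
    mFun d V x ≤ 1 / r :=
  csInf_le ⟨0, by rintro _ ⟨r, hr, rfl, -⟩; positivity⟩ ⟨r, hr, rfl, hψ⟩

lemma GoodV.exists_psiFun_le_one (hV : GoodV d C₀ V) (x : Ed d) :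
    ∃ r > 0, psiFun d V x r ≤ 1 := by
  set M := C₀ * psiFun d V x 1
  set r := (1 + |M|)⁻¹
  have hr : 0 < r := by positivity
  have hr1 : r ≤ 1 := inv_le_one_of_one_le₀ (le_add_of_nonneg_right (abs_nonneg M))
  have hMr : |M| * r ≤ 1 := by
    rw [← div_eq_mul_inv, div_le_one (by positivity)]; linarith
  refine ⟨r, hr, ?_⟩
  calc psiFun d V x r ≤ C₀ * (r / 1) ^ 2 * psiFun d V x 1 :=
        hV.psiFun_le_of_subset hr (by rw [dist_self, zero_add]; exact hr1)
    _ = M * r * r := by rw [div_one]; ring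
    _ ≤ |M| * r * 1 := by gcongr; exact le_abs_self M
    _ ≤ 1 := by rwa [mul_one]

lemma GoodV.exists_psiFun_le_one_of_mFun_lt (hV : GoodV d C₀ V) {x : Ed d} {s : ℝ}
    (hs : mFun d V x < s) : ∃ r, 1 / s < r ∧ psiFun d V x r ≤ 1 := by
  obtain ⟨r₀, hr₀, hψ₀⟩ := hV.exists_psiFun_le_one x
  obtain ⟨_, ⟨r, hr, rfl, hψ⟩, hlt⟩ := exists_lt_of_csInf_lt
    (s := {t | ∃ r, 0 < r ∧ t = 1 / r ∧ psiFun d V x r ≤ 1}) ⟨1 / r₀, r₀, hr₀, rfl, hψ₀⟩ hs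
  exact ⟨r, (one_div_lt hr ((mFun_nonneg x).trans_lt hs)).1 hlt, hψ⟩

lemma GoodV.one_div_le_mFun (hV : GoodV d C₀ V) {x : Ed d} {R : ℝ} (hR : 0 < R)
    (hψ : C₀ < psiFun d V x R) : 1 / R ≤ mFun d V x := by
  obtain ⟨r₀, hr₀, hψ₀⟩ := hV.exists_psiFun_le_one x
  refine le_csInf ⟨1 / r₀, r₀, hr₀, rfl, hψ₀⟩ ?_
  rintro _ ⟨r, hr, rfl, hψr⟩
  refine one_div_le_one_div_of_le hr (le_of_not_gt fun hRr => hψ.not_ge ?_)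
  calc psiFun d V x R ≤ C₀ * (R / r) ^ 2 * psiFun d V x r :=
        hV.psiFun_le_of_subset hR (by rw [dist_self, zero_add]; exact hRr.le)
    _ ≤ C₀ * 1 * 1 := by
        have := hV.one_le
        gcongr
        · exact hV.psiFun_nonneg x hr.le
        · exact pow_le_one₀ (by positivity) ((div_le_one hr).2 hRr.le)
    _ = C₀ := by ring

lemma GoodV.mFun_pos (hV : GoodV d C₀ V) (x : Ed d) : 0 < mFun d V x := by
  set ψ₁ := psiFun d V x 1
  have hψ₁ : 0 < ψ₁ := by
    simpa only [ψ₁, psiFun, Real.one_rpow, one_mul] using hV.integral_ball_pos x one_pos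
  have hC := hV.one_le
  set R := 1 + C₀ ^ 2 / ψ₁
  have hR : 1 ≤ R := le_add_of_nonneg_right (by positivity)
  have hgrowth : ψ₁ ≤ C₀ * (1 / R) ^ 2 * psiFun d V x R :=
    hV.psiFun_le_of_subset one_pos (by rwa [dist_self, zero_add])
  have hRψ : C₀ ^ 2 < ψ₁ * R ^ 2 := by
    have : C₀ ^ 2 < ψ₁ * R := by
      rw [← div_lt_iff₀' hψ₁]; linarith
    nlinarith
  have hψR : C₀ < psiFun d V x R := by
    rw [div_pow, one_pow, mul_one_div, div_mul_eq_mul_div, le_div_iff₀ (by positivity)] at hgrowth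
    nlinarith
  exact (one_div_pos.2 (by linarith)).trans_le (hV.one_div_le_mFun (by linarith) hψR)

lemma GoodV.mFun_le_of_psiFun_le (hV : GoodV d C₀ V) {x y : Ed d} {R M : ℝ} (hR : 0 < R)
    (hM : 1 ≤ C₀ * M) (hψ : psiFun d V x R ≤ M) (hxy : dist x y + R / (C₀ * M) ≤ R) :
    mFun d V y ≤ C₀ * M / R := by
  have hC := hV.one_le
  have hCM : 0 < C₀ * M := by linarith
  have hρ : 0 < R / (C₀ * M) := by positivity
  have hψy : psiFun d V y (R / (C₀ * M)) ≤ 1 :=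
    calc psiFun d V y (R / (C₀ * M)) ≤ C₀ * (R / (C₀ * M) / R) ^ 2 * psiFun d V x R :=
          hV.psiFun_le_of_subset hρ hxy
      _ ≤ C₀ * (R / (C₀ * M) / R) ^ 2 * M := by gcongr
      _ = (C₀ * M)⁻¹ := by field_simp
      _ ≤ 1 := inv_le_one_of_one_le₀ hM
  simpa only [one_div_div] using mFun_le_one_div hρ hψy

lemma GoodV.mFun_le_mul_one_add_pow (hV : GoodV d C₀ V) (hd : 2 ≤ d) {t : ℝ} {k : ℕ}
    (ht : 1 < t) (htd : 2 * C₀ * (t ^ d - 1) ≤ t ^ d) (htk : 2 ≤ t ^ (k + 1)) (x y : Ed d) :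
    mFun d V y ≤ C₀ * (2 * t) ^ (k + 1) * (1 + dist x y * mFun d V x) ^ k * mFun d V x := by
  set m := mFun d V x
  set δ := dist x y
  have hm : 0 < m := hV.mFun_pos x
  have hδ : 0 ≤ δ := dist_nonneg
  have hC := hV.one_le
  obtain ⟨r, hr2m, hψr⟩ := hV.exists_psiFun_le_one_of_mFun_lt (s := 2 * m) (by linarith)
  have hr : 0 < r := (by positivity : (0 : ℝ) < 1 / (2 * m)).trans hr2m
  have hr_inv : 1 / r < 2 * m := (one_div_lt hr (by positivity)).2 hr2m
  set q := (δ + r) / r with hq_def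
  have hq1 : 1 ≤ q := (one_le_div hr).2 (by linarith)
  have hq : q ≤ 2 * (1 + δ * m) := by
    have : q = 1 + δ * (1 / r) := by
      rw [hq_def, add_div, div_self hr.ne', mul_one_div, add_comm]
    rw [this]; nlinarith
  have htq : 1 ≤ (t * q) ^ (k + 1) := one_le_pow₀ (one_le_mul_of_one_le_of_one_le ht.le hq1)
  have hgrowth : psiFun d V x (δ + r) ≤ (t * q) ^ (k + 1) :=
    (hV.psiFun_le_pow hd ht htd htk x hr (by linarith)).trans
      (mul_le_of_le_one_right (by positivity) hψr)
  have hxy : δ + (δ + r) / (C₀ * (t * q) ^ (k + 1)) ≤ δ + r := by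
    have hqM : q ≤ C₀ * (t * q) ^ (k + 1) :=
      calc q ≤ t * q := le_mul_of_one_le_left (by positivity) ht.le
        _ ≤ (t * q) ^ (k + 1) :=
            le_self_pow₀ (one_le_mul_of_one_le_of_one_le ht.le hq1) k.succ_ne_zero
        _ ≤ C₀ * (t * q) ^ (k + 1) := le_mul_of_one_le_left (by positivity) hC
    rw [add_le_add_iff_left, div_le_iff₀ (by positivity)]
    rw [div_le_iff₀ hr] at hqM
    linarith
  calc mFun d V y ≤ C₀ * (t * q) ^ (k + 1) / (δ + r) :=
        hV.mFun_le_of_psiFun_le (by positivity) (one_le_mul_of_one_le_of_one_le hC htq) hgrowth hxy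
    _ = C₀ * t ^ (k + 1) * q ^ k * (1 / r) := by
        have hqr : q / (δ + r) = 1 / r := by rw [hq_def]; field_simp
        rw [← hqr, mul_pow, pow_succ q]; ring
    _ ≤ C₀ * t ^ (k + 1) * (2 * (1 + δ * m)) ^ k * (2 * m) := by gcongr
    _ = C₀ * (2 * t) ^ (k + 1) * (1 + δ * m) ^ k * m := by rw [mul_pow, mul_pow]; ring

lemma exists_mFun_le_mul_one_add_pow (hd : 2 ≤ d) (C₀ : ℝ) :
    ∃ A : ℝ, ∃ k : ℕ, 1 ≤ A ∧ 1 ≤ k ∧ ∀ V : Ed d → ℝ, GoodV d C₀ V → ∀ x y : Ed d,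
      mFun d V y ≤ A * (1 + dist x y * mFun d V x) ^ k * mFun d V x := by
  rcases lt_or_ge C₀ 1 with hC | hC
  · -- `GoodV d C₀ V` forces `1 ≤ C₀`, so there is no such `V`
    exact ⟨1, 1, le_rfl, le_rfl, fun V hV => absurd hV.one_le hC.not_ge⟩
  obtain ⟨t, ht, htd⟩ := exists_annulus_ratio (d := d) (by omega) (by linarith)
  obtain ⟨k, hk⟩ := pow_unbounded_of_one_lt 2 ht
  refine ⟨C₀ * (2 * t) ^ (k + 1), k, one_le_mul_of_one_le_of_one_le hC (one_le_pow₀ (by linarith)),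
    Nat.one_le_iff_ne_zero.2 (by rintro rfl; norm_num at hk), fun V hV =>
    hV.mFun_le_mul_one_add_pow hd ht htd (hk.le.trans (pow_le_pow_right₀ ht.le k.le_succ))⟩

section RealInequalities

variable {A B C c δ mx my S T : ℝ} {k : ℕ}

lemma rpow_div_add_one_pow (hT : 0 ≤ T) (k : ℕ) :
    (T ^ ((k : ℝ) / (k + 1))) ^ (k + 1) = T ^ k := by
  rw [← Real.rpow_mul_natCast hT, Nat.cast_add_one, div_mul_cancel₀ _ (by positivity),
    Real.rpow_natCast]

lemma one_add_mul_le_of_le_pow (hA : 0 ≤ A) (hδ : 0 ≤ δ) (hmy : 0 ≤ my)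
    (h : mx ≤ A * (1 + δ * my) ^ k * my) : 1 + δ * mx ≤ (1 + A) * (1 + δ * my) ^ (k + 1) := by
  have hT : δ * my ≤ 1 + δ * my := le_add_of_nonneg_left zero_le_one
  have hT1 : 1 ≤ (1 + δ * my) ^ (k + 1) := one_le_pow₀ (by linarith [mul_nonneg hδ hmy])
  calc 1 + δ * mx ≤ 1 + A * (1 + δ * my) ^ k * (δ * my) := by nlinarith
    _ ≤ 1 + A * (1 + δ * my) ^ k * (1 + δ * my) := by gcongr
    _ ≤ (1 + A) * (1 + δ * my) ^ (k + 1) := by rw [pow_succ] at hT1 ⊢; linarith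

lemma le_mul_rpow_of_le_pow (hA : 1 ≤ A) (hδ : 0 ≤ δ) (hmx : 0 ≤ mx) (hmy : 0 ≤ my)
    (h : mx ≤ A * (1 + δ * my) ^ k * my) :
    mx ≤ A * 2 ^ k * (1 + δ * mx) ^ ((k : ℝ) / (k + 1)) * my := by
  have hB : 1 ≤ A * 2 ^ k := one_le_mul_of_one_le_of_one_le hA (one_le_pow₀ one_le_two)
  have hT : 1 ≤ 1 + δ * mx := le_add_of_nonneg_right (mul_nonneg hδ hmx)
  suffices mx ^ (k + 1) ≤ (A * 2 ^ k) ^ (k + 1) * (1 + δ * mx) ^ k * my ^ (k + 1) by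
    refine le_of_pow_le_pow_left₀ k.succ_ne_zero (by positivity) ?_
    rwa [mul_pow, mul_pow, rpow_div_add_one_pow (by linarith)]
  rcases le_total (δ * my) 1 with hsmall | hlarge
  · have hbound : mx ≤ A * 2 ^ k * my := h.trans (by gcongr; linarith)
    calc mx ^ (k + 1) ≤ (A * 2 ^ k * my) ^ (k + 1) := pow_le_pow_left₀ hmx hbound _
      _ = (A * 2 ^ k) ^ (k + 1) * 1 * my ^ (k + 1) := by ring
      _ ≤ (A * 2 ^ k) ^ (k + 1) * (1 + δ * mx) ^ k * my ^ (k + 1) := by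
          gcongr; exact one_le_pow₀ hT
  · -- `(1 + δ my)^k ≤ (2 δ my)^k`, and one more factor `mx` turns `(δ my)^k` into `(δ mx)^k`
    have hbound : mx ≤ A * 2 ^ k * (δ * my) ^ k * my :=
      calc mx ≤ A * (1 + δ * my) ^ k * my := h
        _ ≤ A * (2 * (δ * my)) ^ k * my := by gcongr; linarith
        _ = A * 2 ^ k * (δ * my) ^ k * my := by ring
    calc mx ^ (k + 1) = mx ^ k * mx := pow_succ _ _
      _ ≤ mx ^ k * (A * 2 ^ k * (δ * my) ^ k * my) := by gcongr
      _ = A * 2 ^ k * (δ * mx) ^ k * my ^ (k + 1) := by ring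
      _ ≤ (A * 2 ^ k) ^ (k + 1) * (1 + δ * mx) ^ k * my ^ (k + 1) := by
          gcongr
          · exact le_self_pow₀ hB k.succ_ne_zero
          · linarith

lemma mul_one_add_rpow_le (hB : 1 ≤ B) (k : ℕ) :
    B * (1 + (2 * B) ^ (k + 1)) ^ ((k : ℝ) / (k + 1)) ≤ (2 * B) ^ (k + 1) := by
  set θ : ℝ := k / (k + 1)
  have hθ1 : θ ≤ 1 := div_le_one_of_le₀ (by linarith) (by positivity)
  have hC1 : 1 ≤ (2 * B) ^ (k + 1) := one_le_pow₀ (by linarith)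
  have hCθ : ((2 * B) ^ (k + 1)) ^ θ = (2 * B) ^ k := by
    rw [← Real.rpow_natCast_mul (by linarith), Nat.cast_add_one,
      mul_div_cancel₀ _ (by positivity), Real.rpow_natCast]
  calc B * (1 + (2 * B) ^ (k + 1)) ^ θ ≤ B * (2 * (2 * B) ^ (k + 1)) ^ θ := by gcongr; linarith
    _ = B * (2 ^ θ * (2 * B) ^ k) := by rw [Real.mul_rpow zero_le_two (by positivity), hCθ]
    _ ≤ B * (2 * (2 * B) ^ k) := by
        gcongr; exact Real.rpow_le_self_of_one_le one_le_two hθ1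
    _ = (2 * B) ^ (k + 1) := by ring

lemma le_and_le_of_le_one_add (hmx : 0 < mx) (hmy : 0 < my) (hT : 0 ≤ T) (hA : 0 ≤ A)
    (hB : 0 ≤ B) (hc : 0 ≤ c) (hcA : c * (A * (1 + C) ^ k) ≤ 1)
    (hBC : B * (1 + C) ^ ((k : ℝ) / (k + 1)) ≤ C) (hxy : my ≤ A * T ^ k * mx)
    (hyx : mx ≤ B * T ^ ((k : ℝ) / (k + 1)) * my) (hTC : T ≤ 1 + C) :
    c * my ≤ mx ∧ mx ≤ C * my := by
  constructor
  · calc c * my ≤ c * (A * (1 + C) ^ k * mx) :=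
          mul_le_mul_of_nonneg_left (hxy.trans (by gcongr)) hc
      _ ≤ mx := by rw [← mul_assoc]; exact mul_le_of_le_one_left hmx.le hcA
  · calc mx ≤ B * T ^ ((k : ℝ) / (k + 1)) * my := hyx
      _ ≤ B * (1 + C) ^ ((k : ℝ) / (k + 1)) * my := by gcongr
      _ ≤ C * my := by gcongr

lemma le_div_and_div_le (hmx : 0 < mx) (hmy : 0 < my) (hT : 0 < T) (hc : 0 ≤ c)
    (hcA : c * A ≤ 1) (hBC : B ≤ C) (hxy : my ≤ A * T ^ k * mx)
    (hyx : mx ≤ B * T ^ ((k : ℝ) / (k + 1)) * my) :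
    c * T ^ (-(k : ℝ)) ≤ mx / my ∧ mx / my ≤ C * T ^ ((k : ℝ) / (k + 1)) := by
  constructor
  · rw [Real.rpow_neg hT.le, Real.rpow_natCast, le_div_iff₀ hmy]
    calc c * (T ^ k)⁻¹ * my ≤ c * (T ^ k)⁻¹ * (A * T ^ k * mx) := by gcongr
      _ = c * A * mx := by field_simp
      _ ≤ mx := mul_le_of_le_one_left hmx.le hcA
  · rw [div_le_iff₀ hmy]
    exact hyx.trans (by gcongr)

lemma mul_rpow_le_and_le_mul_rpow (hA : 0 ≤ A) (hS : 0 ≤ S) (hT : 0 ≤ T) (hc : 0 ≤ c)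
    (hcA : c * (1 + A) ≤ 1) (hAC : 1 + A ≤ C) (hST : S ≤ (1 + A) * T ^ (k + 1))
    (hTS : T ≤ (1 + A) * S ^ (k + 1)) :
    c * S ^ (1 / ((k : ℝ) + 1)) ≤ T ∧ T ≤ C * S ^ ((k : ℝ) + 1) := by
  rw [← Nat.cast_add_one, Real.rpow_natCast, one_div]
  constructor
  · have hroot : S ^ ((k + 1 : ℕ) : ℝ)⁻¹ ≤ (1 + A) * T := by
      rw [Real.rpow_inv_le_iff_of_pos hS (by positivity) (by positivity), Real.rpow_natCast,
        mul_pow]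
      exact hST.trans (by gcongr; exact le_self_pow₀ (by linarith) k.succ_ne_zero)
    calc c * S ^ ((k + 1 : ℕ) : ℝ)⁻¹ ≤ c * ((1 + A) * T) := by gcongr
      _ ≤ T := by rw [← mul_assoc]; exact mul_le_of_le_one_left hT hcA
  · exact hTS.trans (by gcongr)

end RealInequalities

theorem stmt3_general (d : ℕ) (hd : 3 ≤ d) (C₀ : ℝ) :
    ∃ C c k₀ : ℝ, 0 < C ∧ 0 < c ∧ 0 < k₀ ∧
      ∀ V : Ed d → ℝ, GoodV d C₀ V → ¬ (V =ᵐ[volume] 0) → ∀ x y : Ed d,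
        (dist x y ≤ C / mFun d V x →
          c * mFun d V y ≤ mFun d V x ∧ mFun d V x ≤ C * mFun d V y) ∧
        (c * (1 + dist x y * mFun d V x) ^ (-k₀) ≤ mFun d V x / mFun d V y ∧
          mFun d V x / mFun d V y ≤
            C * (1 + dist x y * mFun d V x) ^ (k₀ / (k₀ + 1))) ∧
        (c * (1 + dist x y * mFun d V y) ^ (1 / (k₀ + 1)) ≤
            1 + dist x y * mFun d V x ∧
          1 + dist x y * mFun d V x ≤
            C * (1 + dist x y * mFun d V y) ^ (k₀ + 1)) := by
  obtain ⟨A, k, hA, hk, hm⟩ := exists_mFun_le_mul_one_add_pow (by omega : 2 ≤ d) C₀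
  set B := A * 2 ^ k
  set C := (2 * B) ^ (k + 1)
  set c := ((1 + A) * (1 + C) ^ k)⁻¹
  have hAB : A ≤ B := le_mul_of_one_le_right (by linarith) (one_le_pow₀ one_le_two)
  have hBC : 2 * B ≤ C := le_self_pow₀ (by linarith) k.succ_ne_zero
  have hC : 1 ≤ (1 + C) ^ k := one_le_pow₀ (by linarith)
  have hc (X : ℝ) (hX : X ≤ (1 + A) * (1 + C) ^ k) : c * X ≤ 1 := by
    rwa [inv_mul_le_iff₀ (by positivity), mul_one]
  refine ⟨C, c, k, by positivity, by positivity, by exact_mod_cast hk, fun V hV _ x y => ?_⟩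
  have hmx := hV.mFun_pos x
  have hmy := hV.mFun_pos y
  have hxy := hm V hV x y
  have hyx := dist_comm x y ▸ hm V hV y x
  have hratio := le_mul_rpow_of_le_pow hA dist_nonneg hmx.le hmy.le hyx
  refine ⟨fun hdist => le_and_le_of_le_one_add hmx hmy (by positivity) (by positivity)
      (by positivity) (by positivity) (hc _ (by gcongr; linarith))
      (mul_one_add_rpow_le (by linarith) k) hxy hratio (by rw [le_div_iff₀ hmx] at hdist; linarith),
    le_div_and_div_le hmx hmy (by positivity) (by positivity) (hc _ (by nlinarith)) (by linarith)
      hxy hratio,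
    mul_rpow_le_and_le_mul_rpow (by positivity) (by positivity) (by positivity) (by positivity)
      (hc _ (by nlinarith)) (by linarith)
      (one_add_mul_le_of_le_pow (by positivity) dist_nonneg hmx.le hxy)
      (one_add_mul_le_of_le_pow (by positivity) dist_nonneg hmy.le hyx)⟩

/-- the standard comparison estimates for `m(·,V)`:
there are `C, c, k₀ > 0` depending only on `d, C₀` such that (i) `m(x,V) ∼ m(y,V)`
when `|x-y| ≤ C/m(x,V)`, and the two-sided polynomial comparison estimates
(ii), (iii) hold. -/
theorem stmt3 (d : ℕ) (hd : 3 ≤ d) (C₀ : ℝ) (hC₀ : 0 < C₀) :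
    ∃ C c k₀ : ℝ, 0 < C ∧ 0 < c ∧ 0 < k₀ ∧
      ∀ V : Ed d → ℝ, GoodV d C₀ V → ¬ (V =ᵐ[volume] 0) → ∀ x y : Ed d,
        (dist x y ≤ C / mFun d V x →
          c * mFun d V y ≤ mFun d V x ∧ mFun d V x ≤ C * mFun d V y) ∧
        (c * (1 + dist x y * mFun d V x) ^ (-k₀) ≤ mFun d V x / mFun d V y ∧
          mFun d V x / mFun d V y ≤
            C * (1 + dist x y * mFun d V x) ^ (k₀ / (k₀ + 1))) ∧
        (c * (1 + dist x y * mFun d V y) ^ (1 / (k₀ + 1)) ≤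
            1 + dist x y * mFun d V x ∧
          1 + dist x y * mFun d V x ≤
            C * (1 + dist x y * mFun d V y) ^ (k₀ + 1)) :=
  stmt3_general d hd C₀
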